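/- Let r : 𝔤* → 𝔤 be a skew-symmetric solution of the classical Yang–Baxter equation. Then the linear map Ξ : 𝔤 × 𝔤* → 𝔤 × 𝔤*, Ξ(x,α) := (x + r(α), α), is a Lie algebra isomorphism from the double Lie algebra 𝒟(𝔤) onto the semidirect product 𝔤 ⋉_{ad*} 𝔤*, and it is an isometry for the canonical pairing ⟨(x,α),(y,β)⟩ := α(y) + β(x) on both sides. -/

import Mathlib

/-- The coadjoint action of `x : L` on the dual: `⟨coad x α, y⟩ = -⟨α, [x,y]⟩`. -/
noncomputable def coad {L : Type*} [LieRing L] [LieAlgebra ℝ L]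
    (x : L) (α : Module.Dual ℝ L) : Module.Dual ℝ L :=
  -(α ∘ₗ (LieAlgebra.ad ℝ L x))

/-- The `r`-bracket `[α,β]_r = ad*_{r α} β - ad*_{r β} α` on the dual. -/
noncomputable def rb {L : Type*} [LieRing L] [LieAlgebra ℝ L]
    (r : Module.Dual ℝ L →ₗ[ℝ] L) (α β : Module.Dual ℝ L) : Module.Dual ℝ L :=
  coad (r α) β - coad (r β) α

/-- `[r,r](α,β,γ) := ⟨γ,[r α, r β]⟩ + ⟨α,[r β, r γ]⟩ + ⟨β,[r γ, r α]⟩`. -/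
def cybe {L : Type*} [LieRing L] [LieAlgebra ℝ L]
    (r : Module.Dual ℝ L →ₗ[ℝ] L) (α β γ : Module.Dual ℝ L) : ℝ :=
  γ ⁅r α, r β⁆ + α ⁅r β, r γ⁆ + β ⁅r γ, r α⁆

/-- The bracket of the double Lie algebra `𝒟(𝔤) = 𝔤 × 𝔤*`, where `cstar` is the
coadjoint action of `(𝔤*, [·,·]_r)` on `𝔤`. -/
noncomputable def dbr {L : Type*} [LieRing L] [LieAlgebra ℝ L]
    (r : Module.Dual ℝ L →ₗ[ℝ] L) (cstar : Module.Dual ℝ L → L → L)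
    (u v : L × Module.Dual ℝ L) : L × Module.Dual ℝ L :=
  (⁅u.1, v.1⁆ + cstar u.2 v.1 - cstar v.2 u.1,
    rb r u.2 v.2 + coad u.1 v.2 - coad v.1 u.2)

/-- The bracket of the semidirect product `𝔤 ⋉_{ad*} 𝔤*`. -/
noncomputable def sdr {L : Type*} [LieRing L] [LieAlgebra ℝ L]
    (u v : L × Module.Dual ℝ L) : L × Module.Dual ℝ L :=
  (⁅u.1, v.1⁆, coad u.1 v.2 - coad v.1 u.2)

/-- The canonical pairing `⟨(x,α),(y,β)⟩ = α y + β x` on `𝔤 × 𝔤*`. -/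
def dpair {L : Type*} [LieRing L] [LieAlgebra ℝ L]
    (u v : L × Module.Dual ℝ L) : ℝ := u.2 v.1 + v.2 u.1

/-!
The map `Ξ` is the shear `(x, α) ↦ (x + r α, α)`, so it is bijective, and it preserves the
pairing because `α (r β) + β (r α) = 0`. For the brackets, the `𝔤*`-components agree since
`ad*` is linear in the acting element. In the `𝔤`-component, the CYBE says exactly that
`r [α, β]_r = [r α, r β]`, and pairing with an arbitrary `γ` shows that the coadjoint action of
`(𝔤*, [·,·]_r)` on `𝔤` is `ad*_α x = [r α, x] + r (ad*_x α)`; together these turn the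
`𝔤`-component of `Ξ [u, v]` into `[x + r α, y + r β]`.
-/

section

variable {L : Type*} [LieRing L] [LieAlgebra ℝ L]

lemma coad_apply (x : L) (α : Module.Dual ℝ L) (y : L) : coad x α y = -α ⁅x, y⁆ := rfl

lemma coad_add_left (x x' : L) (α : Module.Dual ℝ L) :
    coad (x + x') α = coad x α + coad x' α := by
  ext y
  simp only [coad_apply, add_lie, map_add, neg_add, LinearMap.add_apply]

lemma eq_of_forall_dual_apply_eq {x y : L} (h : ∀ γ : Module.Dual ℝ L, γ x = γ y) : x = y :=
  Module.eval_apply_injective ℝ (LinearMap.ext h)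

variable (r : Module.Dual ℝ L →ₗ[ℝ] L)

lemma r_rb_eq_lie (hskew : ∀ α β : Module.Dual ℝ L, α (r β) = - β (r α))
    (hcybe : ∀ α β γ : Module.Dual ℝ L, cybe r α β γ = 0) (α β : Module.Dual ℝ L) :
    r (rb r α β) = ⁅r α, r β⁆ := by
  refine eq_of_forall_dual_apply_eq fun γ => ?_
  have hγ := hcybe α β γ
  rw [cybe, ← lie_skew (r γ), map_neg] at hγ
  rw [hskew, rb, LinearMap.sub_apply, coad_apply, coad_apply]
  linarith

lemma cstar_eq_lie_add_r_coad (hskew : ∀ α β : Module.Dual ℝ L, α (r β) = - β (r α))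
    {cstar : Module.Dual ℝ L → L → L}
    (hcstar : ∀ (α : Module.Dual ℝ L) (x : L) (β : Module.Dual ℝ L),
      β (cstar α x) = -((rb r α β) x))
    (α : Module.Dual ℝ L) (x : L) :
    cstar α x = ⁅r α, x⁆ + r (coad x α) := by
  refine eq_of_forall_dual_apply_eq fun γ => ?_
  rw [hcstar, map_add, hskew, rb, LinearMap.sub_apply, coad_apply, coad_apply, coad_apply,
    ← lie_skew (r γ), map_neg]
  ring

end

theorem stmt7_general {L : Type*} [LieRing L] [LieAlgebra ℝ L]
    (r : Module.Dual ℝ L →ₗ[ℝ] L)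
    (hskew : ∀ α β : Module.Dual ℝ L, α (r β) = - β (r α))
    (hcybe : ∀ α β γ : Module.Dual ℝ L, cybe r α β γ = 0)
    (cstar : Module.Dual ℝ L → L → L)
    (hcstar : ∀ (α : Module.Dual ℝ L) (x : L) (β : Module.Dual ℝ L),
      β (cstar α x) = -((rb r α β) x))
    (Xi : L × Module.Dual ℝ L →ₗ[ℝ] L × Module.Dual ℝ L)
    (hXi : ∀ u : L × Module.Dual ℝ L, Xi u = (u.1 + r u.2, u.2)) :
    Function.Bijective Xi ∧
    (∀ u v : L × Module.Dual ℝ L, Xi (dbr r cstar u v) = sdr (Xi u) (Xi v)) ∧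
    (∀ u v : L × Module.Dual ℝ L, dpair (Xi u) (Xi v) = dpair u v) := by
  refine ⟨?_, ?_, ?_⟩
  · refine Function.bijective_iff_has_inverse.mpr ⟨fun u => (u.1 - r u.2, u.2), ?_, ?_⟩ <;>
      intro u <;> simp [hXi]
  · rintro ⟨x, α⟩ ⟨y, β⟩
    simp only [hXi, dbr, sdr, map_add, map_sub, r_rb_eq_lie r hskew hcybe,
      cstar_eq_lie_add_r_coad r hskew hcstar, coad_add_left, Prod.mk.injEq]
    constructor
    · simp only [lie_add, add_lie, ← lie_skew (r β) x]
      abel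
    · rw [rb]
      abel
  · rintro ⟨x, α⟩ ⟨y, β⟩
    simp only [hXi, dpair, map_add, hskew α β]
    ring

/-- for a skew-symmetric solution `r` of the CYBE, the linear map
`Ξ(x,α) = (x + r α, α)` is a Lie algebra isomorphism from the double `𝒟(𝔤)` onto
`𝔤 ⋉_{ad*} 𝔤*` and an isometry of the canonical pairings. -/
theorem stmt7 {L : Type*} [LieRing L] [LieAlgebra ℝ L] [FiniteDimensional ℝ L]
    (r : Module.Dual ℝ L →ₗ[ℝ] L)
    (hskew : ∀ α β : Module.Dual ℝ L, α (r β) = - β (r α))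
    (hcybe : ∀ α β γ : Module.Dual ℝ L, cybe r α β γ = 0)
    (cstar : Module.Dual ℝ L → L → L)
    (hcstar : ∀ (α : Module.Dual ℝ L) (x : L) (β : Module.Dual ℝ L),
      β (cstar α x) = -((rb r α β) x))
    (Xi : L × Module.Dual ℝ L →ₗ[ℝ] L × Module.Dual ℝ L)
    (hXi : ∀ u : L × Module.Dual ℝ L, Xi u = (u.1 + r u.2, u.2)) :
    Function.Bijective Xi ∧
    (∀ u v : L × Module.Dual ℝ L, Xi (dbr r cstar u v) = sdr (Xi u) (Xi v)) ∧
    (∀ u v : L × Module.Dual ℝ L, dpair (Xi u) (Xi v) = dpair u v) :=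
  stmt7_general r hskew hcybe cstar hcstar Xi hXi
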